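/- Let γ ∈ (0,1) be irrational. The characteristic Sturmian word c_γ is generated by a standard morphism (i.e. c_γ = ψ^ω(c) for some standard morphism ψ and some letter c ∈ {a,b}) if and only if γ is a Sturm number. -/

import Mathlib

/-- The two-letter alphabet 𝒜 = {a, b}. -/
inductive AB : Type
  | a : AB
  | b : AB
deriving DecidableEq, Repr

/-- Apply a morphism (determined by its images on the letters) to a finite word. -/
def applyM (g : AB → List AB) (w : List AB) : List AB := w.flatMap g

/-- The exchange morphism E : a ↦ b, b ↦ a. -/
def Em : AB → List AB
  | AB.a => [AB.b]
  | AB.b => [AB.a]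

/-- The morphism φ : a ↦ ab, b ↦ a. -/
def phim : AB → List AB
  | AB.a => [AB.a, AB.b]
  | AB.b => [AB.a]

/-- Composition of morphisms: `compM g h` applies `h` first, then `g`. -/
def compM (g h : AB → List AB) : AB → List AB := fun c => applyM g (h c)

/-- Powers of a morphism. -/
def mpow (g : AB → List AB) : ℕ → AB → List AB
  | 0 => fun c => [c]
  | n + 1 => compM g (mpow g n)

/-- A morphism is standard iff it is a composition of E and φ (in any number and order). -/
inductive IsStandard : (AB → List AB) → Prop
  | id : IsStandard (fun c => [c])
  | compE {ψ : AB → List AB} : IsStandard ψ → IsStandard (compM ψ Em)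
  | compPhi {ψ : AB → List AB} : IsStandard ψ → IsStandard (compM ψ phim)

/-- `IsRightConj ψ ξ k` : ξ is the k-th right conjugate of ψ, i.e. there is a word u
of length k with ψ(w)u = uξ(w) for all finite words w. -/
def IsRightConj (ψ ξ : AB → List AB) (k : ℕ) : Prop :=
  ∃ u : List AB, u.length = k ∧ ∀ w : List AB, applyM ψ w ++ u = u ++ applyM ξ w

/-- w^k (power of a finite word under concatenation). -/
def lpow (w : List AB) : ℕ → List AB
  | 0 => []
  | k + 1 => w ++ lpow w k

/-- Standard sequence associated with a directive sequence (d₁, d₂, …) (here `d`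
is indexed so that `d i` is dᵢ for i ≥ 1): `sseq d 0 = s₋₁ = b`, `sseq d (n+1) = sₙ`,
with s₀ = a and sₙ = sₙ₋₁^{dₙ} sₙ₋₂. -/
def sseq (d : ℕ → ℕ) : ℕ → List AB
  | 0 => [AB.b]
  | 1 => [AB.a]
  | n + 2 => lpow (sseq d (n + 1)) (d (n + 1)) ++ sseq d n

/-- Convergent denominators: `qseq d n` = qₙ = |sₙ| (q₀ = 1, q₁ = 1 + d₁,
qₙ = dₙqₙ₋₁ + qₙ₋₂). -/
def qseq (d : ℕ → ℕ) : ℕ → ℕ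
  | 0 => 1
  | 1 => 1 + d 1
  | n + 2 => d (n + 2) * qseq d (n + 1) + qseq d n

/-- `PrefInf u x` : the finite word u is a prefix of the infinite word x. -/
def PrefInf (u : List AB) (x : ℕ → AB) : Prop :=
  ∀ i, i < u.length → u.getD i AB.a = x i

/-- Image of an infinite word under a (non-erasing) morphism, letter by letter. -/
def applyInf (g : AB → List AB) (x : ℕ → AB) : ℕ → AB :=
  fun i => (applyM g ((List.range (i + 1)).map x)).getD i AB.a

/-- `IsProdInf u x` : the infinite word x is the infinite product u 0 · u 1 · u 2 ⋯,
i.e. every finite partial product is a prefix of x. -/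
def IsProdInf (u : ℕ → List AB) (x : ℕ → AB) : Prop :=
  ∀ n, PrefInf (((List.range n).map u).flatten) x

/-- Adjoining singular words: `vword d k` is the adjoining singular word v_{k-1}
(so `vword d 0 = v₋₁`), where vₙ = a·sₙ₊₁^{d_{n+2}−1}sₙ·b⁻¹ for n odd and
vₙ = b·sₙ₊₁^{d_{n+2}−1}sₙ·a⁻¹ for n even. -/
def vword (d : ℕ → ℕ) (k : ℕ) : List AB :=
  (if k % 2 = 0 then AB.a else AB.b) ::
    (lpow (sseq d (k + 1)) (d (k + 1) - 1) ++ sseq d k).dropLast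

/-- Singular words: `wword d k` is the singular word w_{k-2}
(w₋₂ = ε, w₋₁ = a, w₀ = b, and wₙ = a·sₙ·b⁻¹ for n ≥ 1 odd, wₙ = b·sₙ·a⁻¹ for n even). -/
def wword (d : ℕ → ℕ) : ℕ → List AB
  | 0 => []
  | 1 => [AB.a]
  | 2 => [AB.b]
  | k + 3 =>
      (if (k + 1) % 2 = 1 then AB.a else AB.b) :: (sseq d (k + 2)).dropLast

/-- The standard morphism σ associated with a type (i) Sturm number
α = [0;1+d₁,\overline{d₂,…,dₙ}] : σ(a) = sₙ₋₁, σ(b) = sₙ₋₁^{dₙ−d₁} sₙ₋₂. -/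
def sigmaGen (d : ℕ → ℕ) (n : ℕ) : AB → List AB
  | AB.a => sseq d n
  | AB.b => lpow (sseq d n) (d n - d 1) ++ sseq d (n - 1)

/-- The directive sequence of α = [0;2,\overline{r}] : d₁ = 1, dᵢ = r for i ≥ 2. -/
def dseq (r : ℕ) : ℕ → ℕ := fun i => if i ≤ 1 then 1 else r

/-- The directive sequence of 1 − α = [0;1,d₁,\overline{d₂,…,dₙ}] obtained from that of
α = [0;1+d₁,\overline{d₂,…,dₙ}] : ê₁ = 0 and êᵢ = dᵢ₋₁ for i ≥ 2. -/
def dhat (d : ℕ → ℕ) : ℕ → ℕ := fun i => if i ≤ 1 then 0 else d (i - 1)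

/-- `Generates ψ c x` : ψ is prolongable on the letter c and x = ψ^ω(c), i.e. every
ψ^m(c) is a prefix of x. -/
def Generates (ψ : AB → List AB) (c : AB) (x : ℕ → AB) : Prop :=
  (∃ w : List AB, w ≠ [] ∧ ψ c = c :: w) ∧ ∀ m, PrefInf (mpow ψ m c) x

/-- Fibonacci numbers, shifted: `fibw k = F_{k-1}`, so fibw 0 = F₋₁ = 1,
fibw 1 = F₀ = 1, Fₙ = Fₙ₋₁ + Fₙ₋₂. -/
def fibw : ℕ → ℕ
  | 0 => 1
  | 1 => 1
  | n + 2 => fibw (n + 1) + fibw n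

/-- `HasCF γ a` : γ has continued fraction expansion [0; a 1, a 2, a 3, …]. -/
def HasCF (γ : ℝ) (a : ℕ → ℕ) : Prop :=
  ∃ x : ℕ → ℝ, x 0 = γ ∧ (∀ i, 0 < x i ∧ x i < 1) ∧
    ∀ i, 1 / x i = (a (i + 1) : ℝ) + x (i + 1)

/-- γ has a continued fraction expansion of type (i):
γ = [0;1+d₁,\overline{d₂,…,dₙ}] < 1/2 with dₙ ≥ d₁ ≥ 1. -/
def CFTypeI (γ : ℝ) : Prop :=
  ∃ a : ℕ → ℕ, HasCF γ a ∧ γ < 1 / 2 ∧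
    ∃ n : ℕ, 2 ≤ n ∧ ∃ d : ℕ → ℕ,
      (∀ i, 1 ≤ i → 1 ≤ d i) ∧ a 1 = 1 + d 1 ∧ (∀ i, 2 ≤ i → a i = d i) ∧
      (∀ i, 2 ≤ i → d (i + (n - 1)) = d i) ∧ d 1 ≤ d n

/-- γ has a continued fraction expansion of type (ii):
γ = [0;1,d₁,\overline{d₂,…,dₙ}] > 1/2 with dₙ ≥ d₁. -/
def CFTypeII (γ : ℝ) : Prop :=
  ∃ a : ℕ → ℕ, HasCF γ a ∧ 1 / 2 < γ ∧
    ∃ n : ℕ, 2 ≤ n ∧ ∃ d : ℕ → ℕ,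
      (∀ i, 1 ≤ i → 1 ≤ d i) ∧ a 1 = 1 ∧ (∀ i, 2 ≤ i → a i = d (i - 1)) ∧
      (∀ i, 2 ≤ i → d (i + (n - 1)) = d i) ∧ d 1 ≤ d n

/-- A Sturm number: an irrational γ ∈ (0,1) whose continued fraction expansion is of
type (i) or type (ii). -/
def IsSturmNumber (γ : ℝ) : Prop :=
  Irrational γ ∧ 0 < γ ∧ γ < 1 ∧ (CFTypeI γ ∨ CFTypeII γ)


/-!
Up to a leading exchange `E`, every standard morphism is `μ_{f₁} ∘ ⋯ ∘ μ_{f_q} ∘ Gᵗ` with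
`μₑ : a ↦ aᵉb, b ↦ a` and `Gᵗ : a ↦ a, b ↦ aᵗb`, and `μ_{d₁}` maps the standard words of the
directive sequence `(d₂, d₃, …)` to those of `(d₁, d₂, …)`. Hence such a morphism sends `sₖ` to
the standard word `s_{q+k}` of the directive sequence `(f₁, …, f_q, t + d₁, d₂, d₃, …)`.
If it generates `c`, these words are prefixes of `c`; since a characteristic word determines its
directive sequence, `(d₁, d₂, …)` is periodic from `d₂` on with period `q`, and `d_{q+1} = t + d₁`.
Conversely such a period makes `μ_{d₁} ∘ ⋯ ∘ μ_{d_q} ∘ G^{d_{q+1} - d₁}` map each `sₖ` to `s_{k+q}`,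
so it generates `c`. Since `c` begins with `s₀ = a` and `s₁ = a^{a₁-1}b`, `a₁ ≥ 2`, which rules out
type (ii).
-/

abbrev idM : AB → List AB := fun c => [c]

@[simp] lemma applyM_nil (g : AB → List AB) : applyM g [] = [] := rfl

@[simp] lemma applyM_cons (g : AB → List AB) (c : AB) (w : List AB) :
    applyM g (c :: w) = g c ++ applyM g w := rfl

@[simp] lemma applyM_append (g : AB → List AB) (u v : List AB) :
    applyM g (u ++ v) = applyM g u ++ applyM g v := List.flatMap_append

lemma applyM_singleton (g : AB → List AB) (c : AB) : applyM g [c] = g c := by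
  simp

@[simp] lemma applyM_idM (w : List AB) : applyM idM w = w := by
  simp [applyM]

lemma applyM_compM (g h : AB → List AB) (w : List AB) :
    applyM (compM g h) w = applyM g (applyM h w) := by
  induction w with
  | nil => rfl
  | cons c w ih => simp [compM, ih]

lemma compM_assoc (f g h : AB → List AB) : compM (compM f g) h = compM f (compM g h) := by
  funext c
  simp [compM, applyM_compM]

@[simp] lemma idM_compM (g : AB → List AB) : compM idM g = g := by
  funext c
  simp [compM]

@[simp] lemma compM_idM (g : AB → List AB) : compM g idM = g := by
  funext c
  simp [compM]

lemma applyM_lpow (g : AB → List AB) (w : List AB) (k : ℕ) :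
    applyM g (lpow w k) = lpow (applyM g w) k := by
  induction k with
  | zero => rfl
  | succ k ih => simp [lpow, ih]

lemma lpow_singleton (c : AB) (k : ℕ) : lpow [c] k = List.replicate k c := by
  induction k with
  | zero => rfl
  | succ k ih => simp [lpow, ih, List.replicate_succ]

lemma lpow_succ' (w : List AB) (k : ℕ) : lpow w (k + 1) = lpow w k ++ w := by
  induction k with
  | zero => simp [lpow]
  | succ k ih =>
      show w ++ lpow w (k + 1) = (w ++ lpow w k) ++ w
      rw [ih, List.append_assoc]

lemma lpow_add (w : List AB) (j k : ℕ) : lpow w (j + k) = lpow w j ++ lpow w k := by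
  induction j with
  | zero => simp [lpow]
  | succ j ih => rw [Nat.add_right_comm]; simp [lpow, ih]

def GM (t : ℕ) : AB → List AB
  | AB.a => [AB.a]
  | AB.b => List.replicate t AB.a ++ [AB.b]

def muM (e : ℕ) : AB → List AB
  | AB.a => List.replicate e AB.a ++ [AB.b]
  | AB.b => [AB.a]

lemma GM_zero : GM 0 = idM := by
  funext c; cases c <;> rfl

lemma compM_Em_Em : compM Em Em = idM := by
  funext c; cases c <;> rfl

lemma compM_GM_muM (t e : ℕ) : compM (GM t) (muM e) = muM (t + e) := by
  funext c
  cases c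
  · simp only [compM, applyM, muM, GM, List.flatMap_append, List.flatMap_replicate,
      List.flatten_replicate_singleton, List.flatMap_cons, List.flatMap_nil, List.append_nil]
    rw [← List.append_assoc, List.replicate_append_replicate, Nat.add_comm]
  · rfl

lemma compM_GM_phim (t : ℕ) : compM (GM t) phim = muM (t + 1) := by
  funext c; cases c <;> simp [compM, applyM, GM, muM, phim, List.replicate_succ]

lemma compM_GM_Em (t : ℕ) : compM (GM t) Em = muM t := by
  funext c; cases c <;> simp [compM, applyM, GM, muM, Em]

lemma compM_muM_Em (e : ℕ) : compM (muM e) Em = GM e := by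
  funext c; cases c <;> simp [compM, applyM, GM, muM, Em]

lemma GM_succ (t : ℕ) : GM (t + 1) = compM (compM (GM t) phim) Em := by
  funext c; cases c <;> simp [compM, applyM, GM, phim, Em, List.replicate_succ]

def muList : List ℕ → AB → List AB
  | [] => idM
  | e :: l => compM (muM e) (muList l)

lemma muList_append (l₁ l₂ : List ℕ) :
    muList (l₁ ++ l₂) = compM (muList l₁) (muList l₂) := by
  induction l₁ with
  | nil => simp [muList]
  | cons e l ih => simp [muList, ih, compM_assoc]

lemma IsStandard.comp {f g : AB → List AB} (hf : IsStandard f) (hg : IsStandard g) :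
    IsStandard (compM f g) := by
  induction hg with
  | id => simpa using hf
  | compE _ ih => rw [← compM_assoc]; exact ih.compE
  | compPhi _ ih => rw [← compM_assoc]; exact ih.compPhi

lemma isStandard_GM (t : ℕ) : IsStandard (GM t) := by
  induction t with
  | zero => rw [GM_zero]; exact .id
  | succ t ih => rw [GM_succ]; exact ih.compPhi.compE

lemma isStandard_muM (e : ℕ) : IsStandard (muM e) := by
  rw [← compM_GM_Em]; exact (isStandard_GM e).compE

lemma isStandard_muList (l : List ℕ) : IsStandard (muList l) := by
  induction l with
  | nil => exact .id
  | cons e l ih => exact (isStandard_muM e).comp ih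

lemma compM_normal_phim (l : List ℕ) (t : ℕ) :
    compM (compM (muList l) (GM t)) phim = compM (muList (l ++ [t + 1])) (GM 0) := by
  rw [compM_assoc, compM_GM_phim, muList_append, GM_zero]
  simp [muList]

lemma exists_normal_compM_Em (l : List ℕ) (t : ℕ) (hl : ∀ e ∈ l, 1 ≤ e) :
    ∃ l' t', (∀ e ∈ l', 1 ≤ e) ∧
      (compM (compM (muList l) (GM t)) Em = compM (muList l') (GM t') ∨
        compM (compM (muList l) (GM t)) Em = compM Em (compM (muList l') (GM t'))) := by
  rcases t with _ | t
  · rcases List.eq_nil_or_concat' l with rfl | ⟨l', e, rfl⟩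
    · exact ⟨[], 0, by simp, Or.inr (by simp [muList, GM_zero])⟩
    · refine ⟨l', e, fun e' he' => hl e' (by simp [he']), Or.inl ?_⟩
      rw [GM_zero, compM_idM, muList_append, compM_assoc]
      simp [muList, compM_muM_Em]
  · refine ⟨l ++ [t + 1], 0, by simpa [or_imp, forall_and] using hl, Or.inl ?_⟩
    rw [compM_assoc, compM_GM_Em, muList_append, GM_zero]
    simp [muList]

lemma IsStandard.exists_normalForm {ψ : AB → List AB} (h : IsStandard ψ) :
    ∃ l t, (∀ e ∈ l, 1 ≤ e) ∧
      (ψ = compM (muList l) (GM t) ∨ ψ = compM Em (compM (muList l) (GM t))) := by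
  induction h with
  | id => exact ⟨[], 0, by simp, Or.inl (by simp [muList, GM_zero])⟩
  | compE _ ih =>
      obtain ⟨l, t, hl, rfl | rfl⟩ := ih
      · exact exists_normal_compM_Em l t hl
      · obtain ⟨l', t', hl', h | h⟩ := exists_normal_compM_Em l t hl
        · exact ⟨l', t', hl', Or.inr (by rw [compM_assoc, h])⟩
        · refine ⟨l', t', hl', Or.inl ?_⟩
          rw [compM_assoc, h, ← compM_assoc, compM_Em_Em, idM_compM]
  | compPhi _ ih =>
      obtain ⟨l, t, hl, rfl | rfl⟩ := ih <;>
        refine ⟨l ++ [t + 1], 0, by simpa [or_imp, forall_and] using hl, ?_⟩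
      · exact Or.inl (compM_normal_phim l t)
      · exact Or.inr (by rw [compM_assoc, compM_normal_phim])

lemma muList_a_eq_cons {l : List ℕ} (hl : ∀ e ∈ l, 1 ≤ e) : ∃ r, muList l AB.a = AB.a :: r := by
  induction l with
  | nil => exact ⟨[], rfl⟩
  | cons e l ih =>
      obtain ⟨r, hr⟩ := ih fun e' he' => hl e' (by simp [he'])
      obtain ⟨e, rfl⟩ := Nat.exists_eq_add_of_le' (hl e (by simp))
      exact ⟨List.replicate e AB.a ++ AB.b :: applyM (muM (e + 1)) r,
        by simp [muList, compM, hr, muM, List.replicate_succ]⟩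

lemma IsStandard.exists_eq_muList_of_prolongable {ψ : AB → List AB} (hψ : IsStandard ψ)
    {w : List AB} (hw : w ≠ []) (hpr : ψ AB.a = AB.a :: w) :
    ∃ l t, l ≠ [] ∧ (∀ e ∈ l, 1 ≤ e) ∧ ψ = compM (muList l) (GM t) := by
  obtain ⟨l, t, hl, rfl | rfl⟩ := hψ.exists_normalForm
  · refine ⟨l, t, ?_, hl, rfl⟩
    rintro rfl
    exact hw (by simpa [compM, muList, GM] using hpr)
  · obtain ⟨r, hr⟩ := muList_a_eq_cons hl
    simp [compM, GM, hr, Em] at hpr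

lemma sseq_congr {d d' : ℕ → ℕ} {k : ℕ} (h : ∀ i, 1 ≤ i → i < k → d i = d' i) :
    sseq d k = sseq d' k := by
  induction k using Nat.strong_induction_on with
  | _ k ih =>
      match k with
      | 0 | 1 => rfl
      | n + 2 =>
          simp only [sseq]
          rw [h (n + 1) (by omega) (by omega),
            ih (n + 1) (by omega) fun i h1 _ => h i h1 (by omega),
            ih n (by omega) fun i h1 _ => h i h1 (by omega)]

lemma sseq_two (d : ℕ → ℕ) : sseq d 2 = List.replicate (d 1) AB.a ++ [AB.b] := by
  simp [sseq, lpow_singleton]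

lemma sseq_succ_eq_applyM_muM (d : ℕ → ℕ) :
    ∀ k, sseq d (k + 1) = applyM (muM (d 1)) (sseq (fun i => d (i + 1)) k)
  | 0 => rfl
  | 1 => by simp [sseq, muM, lpow_singleton]
  | k + 2 => by
      rw [sseq, sseq_succ_eq_applyM_muM d (k + 1), sseq_succ_eq_applyM_muM d k]
      simp [sseq, applyM_lpow]

lemma sseq_add_eq_applyM_muList (d : ℕ → ℕ) (q k : ℕ) :
    sseq d (q + k) =
      applyM (muList ((List.range q).map fun i => d (i + 1))) (sseq (fun i => d (i + q)) k) := by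
  induction q generalizing d with
  | zero => simp [muList]
  | succ q ih =>
      rw [Nat.add_right_comm, sseq_succ_eq_applyM_muM, ih, List.range_succ_eq_map]
      simp [muList, applyM_compM, Nat.add_assoc, Function.comp_def]

lemma applyM_GM_sseq {d d' : ℕ → ℕ} {t : ℕ} (h1 : d' 1 = t + d 1)
    (h2 : ∀ i, 2 ≤ i → d' i = d i) (k : ℕ) :
    applyM (GM t) (sseq d (k + 1)) = sseq d' (k + 1) := by
  rw [sseq_succ_eq_applyM_muM, sseq_succ_eq_applyM_muM, ← applyM_compM, compM_GM_muM, h1]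
  exact congrArg _ (sseq_congr fun i hi _ => (h2 (i + 1) (by omega)).symm)

lemma applyM_normal_sseq {l : List ℕ} {t : ℕ} {d F : ℕ → ℕ}
    (hl : ∀ i (hi : i < l.length), F (i + 1) = l[i]) (h1 : F (l.length + 1) = t + d 1)
    (h2 : ∀ i, 2 ≤ i → F (i + l.length) = d i) (k : ℕ) :
    applyM (compM (muList l) (GM t)) (sseq d (k + 1)) = sseq F (l.length + (k + 1)) := by
  have hmap : (List.range l.length).map (fun i => F (i + 1)) = l :=
    List.ext_getElem (by simp) fun i h _ => by simpa using hl i (by simpa using h)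
  rw [sseq_add_eq_applyM_muList F l.length (k + 1), hmap, applyM_compM,
    applyM_GM_sseq (d' := fun i => F (i + l.length)) (by rw [Nat.add_comm]; exact h1) h2]

lemma sseq_prefix_sseq_succ (d : ℕ → ℕ) (k : ℕ) (h : 1 ≤ d (k + 1)) :
    sseq d (k + 1) <+: sseq d (k + 2) := by
  obtain ⟨m, hm⟩ := Nat.exists_eq_add_of_le' h
  rw [sseq, hm, lpow, List.append_assoc]
  exact List.prefix_append _ _

lemma sseq_prefix_of_le {d : ℕ → ℕ} (hd : ∀ i, 1 ≤ i → 1 ≤ d i) {j k : ℕ} (hjk : j ≤ k) :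
    sseq d (j + 1) <+: sseq d (k + 1) := by
  induction k, hjk using Nat.le_induction with
  | base => exact List.prefix_refl _
  | succ k _ ih => exact ih.trans (sseq_prefix_sseq_succ d k (hd _ (by omega)))

lemma sseq_append_ne (d : ℕ → ℕ) (k : ℕ) :
    sseq d k ++ sseq d (k + 1) ≠ sseq d (k + 1) ++ sseq d k := by
  induction k with
  | zero => simp [sseq]
  | succ k ih =>
      intro h
      apply ih
      set S := sseq d (k + 1)
      set T := sseq d k
      set P := lpow S (d (k + 1))
      have hSP : S ++ P = P ++ S := by rw [← lpow_succ', lpow]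
      have h' : P ++ (S ++ T) = P ++ (T ++ S) := by
        calc P ++ (S ++ T) = S ++ (P ++ T) := by rw [← List.append_assoc, ← hSP, List.append_assoc]
          _ = (P ++ T) ++ S := h
          _ = P ++ (T ++ S) := List.append_assoc _ _ _
      exact (List.append_cancel_left h').symm

lemma prefix_lpow_append {u v : List AB} (h : u <+: v) (j : ℕ) : u <+: lpow v j ++ u := by
  cases j with
  | zero => exact List.prefix_refl _
  | succ j => exact h.trans (by rw [lpow, List.append_assoc]; exact List.prefix_append _ _)

lemma prefInf_iff {u : List AB} {x : ℕ → AB} :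
    PrefInf u x ↔ ∀ i (hi : i < u.length), u[i] = x i := by
  refine forall_congr' fun i => ⟨fun h hi => ?_, fun h hi => ?_⟩
  · rw [← h hi, List.getD_eq_getElem]
  · rw [List.getD_eq_getElem _ _ hi, h hi]

lemma PrefInf.of_prefix {u v : List AB} {x : ℕ → AB} (hv : PrefInf v x) (h : u <+: v) :
    PrefInf u x :=
  prefInf_iff.2 fun i hi => by rw [h.getElem hi, prefInf_iff.1 hv]

lemma PrefInf.prefix_of_length_le {u v : List AB} {x : ℕ → AB} (hu : PrefInf u x)
    (hv : PrefInf v x) (h : u.length ≤ v.length) : u <+: v := by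
  rw [List.prefix_iff_eq_take]
  refine List.ext_getElem (by simp [h]) fun i h1 h2 => ?_
  rw [List.getElem_take, prefInf_iff.1 hu, prefInf_iff.1 hv]

lemma PrefInf.eq_of_length_eq {u v : List AB} {x : ℕ → AB} (hu : PrefInf u x)
    (hv : PrefInf v x) (h : u.length = v.length) : u = v :=
  (hu.prefix_of_length_le hv h.le).eq_of_length h

lemma PrefInf.head {c : AB} {w : List AB} {x : ℕ → AB} (h : PrefInf (c :: w) x) : x 0 = c :=
  (prefInf_iff.1 h 0 (by simp)).symm

/-- At the first index `m ≥ 2` where the directive sequences differ, `x` begins with both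
`U ++ T ++ S` and `U ++ S ++ T`, where `S = sseq d m`, `T = sseq d (m - 1)`, `U = S ^ d m`;
this contradicts `sseq_append_ne`. -/
lemma not_lt_of_prefInf_sseq {d d' : ℕ → ℕ} {x : ℕ → AB} (hd : ∀ i, 1 ≤ i → 1 ≤ d i)
    (hx : ∀ k, PrefInf (sseq d (k + 1)) x) (hx' : ∀ k, PrefInf (sseq d' (k + 1)) x)
    {m : ℕ} (hm : 1 ≤ m) (heq : ∀ j, 1 ≤ j → j < m → d j = d' j) : ¬ d m < d' m := by
  intro hlt
  obtain ⟨s, hs⟩ := Nat.exists_eq_add_of_lt hlt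
  match m, hm with
  | 1, _ =>
      have h2 : List.replicate (d 1) AB.a ++ [AB.a] <+: sseq d' 2 := by
        rw [sseq_two, show d' 1 = d 1 + 1 + s by omega, List.replicate_add, List.replicate_add,
          List.append_assoc, List.append_assoc]
        exact (List.prefix_append_right_inj _).2 (List.prefix_append _ _)
      have := (hx 1).eq_of_length_eq ((hx' 1).of_prefix h2) (by simp [sseq_two])
      simp [sseq_two] at this
  | r + 2, _ =>
      set S := sseq d (r + 2)
      set T := sseq d (r + 1)
      set U := lpow S (d (r + 2))
      have hTS : T <+: S := sseq_prefix_sseq_succ d r (hd _ (by omega))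
      have hSUT : S <+: U ++ T := sseq_prefix_sseq_succ d (r + 1) (hd _ (by omega))
      have hUTS : PrefInf (U ++ T ++ S) x := by
        obtain ⟨j, hj⟩ := Nat.exists_eq_add_of_le' (hd (r + 3) (by omega))
        refine (hx (r + 3)).of_prefix ?_
        show U ++ T ++ S <+: lpow (U ++ T) (d (r + 3)) ++ S
        rw [hj, lpow, List.append_assoc (U ++ T)]
        exact (List.prefix_append_right_inj _).2 (prefix_lpow_append hSUT j)
      have hUST : PrefInf (U ++ S ++ T) x := by
        have hd' : sseq d' (r + 3) = lpow S (d' (r + 2)) ++ T := by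
          rw [sseq, sseq_congr fun i h1 h2 => (heq i h1 (by omega)).symm,
            sseq_congr (k := r + 1) fun i h1 h2 => (heq i h1 (by omega)).symm]
        refine (hx' (r + 2)).of_prefix ?_
        rw [hd', hs, Nat.add_assoc, lpow_add, lpow, List.append_assoc, List.append_assoc,
          List.append_assoc]
        exact (List.prefix_append_right_inj _).2 ((List.prefix_append_right_inj _).2
          (prefix_lpow_append hTS s))
      have h := hUTS.eq_of_length_eq hUST (by simp only [List.length_append]; omega)
      rw [List.append_assoc, List.append_assoc] at h
      exact sseq_append_ne d (r + 1) (List.append_cancel_left h)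

theorem eq_of_prefInf_sseq {d d' : ℕ → ℕ} {x : ℕ → AB} (hd : ∀ i, 1 ≤ i → 1 ≤ d i)
    (hd' : ∀ i, 1 ≤ i → 1 ≤ d' i) (hx : ∀ k, PrefInf (sseq d (k + 1)) x)
    (hx' : ∀ k, PrefInf (sseq d' (k + 1)) x) : ∀ i, 1 ≤ i → d i = d' i := by
  intro i
  induction i using Nat.strong_induction_on with
  | _ i ih =>
      intro hi
      have heq : ∀ j, 1 ≤ j → j < i → d j = d' j := fun j hj hji => ih j hji hj
      exact le_antisymm
        (not_lt.1 (not_lt_of_prefInf_sseq hd' hx' hx hi fun j h1 h2 => (heq j h1 h2).symm))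
        (not_lt.1 (not_lt_of_prefInf_sseq hd hx hx' hi heq))

def IsNonErasing (ψ : AB → List AB) : Prop := ∀ c, ψ c ≠ []

lemma IsStandard.isNonErasing {ψ : AB → List AB} (h : IsStandard ψ) : IsNonErasing ψ := by
  induction h with
  | id => simp [IsNonErasing]
  | compE _ ih => intro c; cases c <;> simp [compM, Em, ih _]
  | compPhi _ ih => intro c; cases c <;> simp [compM, phim, ih _]

lemma IsNonErasing.length_le_length_applyM {ψ : AB → List AB} (hψ : IsNonErasing ψ)
    (w : List AB) : w.length ≤ (applyM ψ w).length := by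
  induction w with
  | nil => simp
  | cons c w ih =>
      have := List.length_pos_iff.2 (hψ c)
      simp only [applyM_cons, List.length_append, List.length_cons]
      omega

lemma mpow_eq_cons_of_prolongable {ψ : AB → List AB} (hψ : IsNonErasing ψ) {c : AB}
    {w : List AB} (hw : w ≠ []) (h : ψ c = c :: w) (m : ℕ) :
    ∃ r, mpow ψ m c = c :: r ∧ m ≤ r.length := by
  induction m with
  | zero => exact ⟨[], rfl, le_rfl⟩
  | succ m ih =>
      obtain ⟨r, hr, hlen⟩ := ih
      refine ⟨w ++ applyM ψ r, by simp [mpow, compM, hr, h], ?_⟩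
      have := List.length_pos_iff.2 hw
      have := hψ.length_le_length_applyM r
      simp only [List.length_append]
      omega

lemma Generates.prefInf_applyM {ψ : AB → List AB} {c : AB} {x : ℕ → AB}
    (hgen : Generates ψ c x) (hψ : IsNonErasing ψ) {u : List AB} (hu : PrefInf u x) :
    PrefInf (applyM ψ u) x := by
  obtain ⟨⟨w, hw, hpr⟩, hpref⟩ := hgen
  obtain ⟨r, hr, hlen⟩ := mpow_eq_cons_of_prolongable hψ hw hpr u.length
  obtain ⟨v, hv⟩ :=
    hu.prefix_of_length_le (hpref u.length) (by simp only [hr, List.length_cons]; omega)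
  refine (hpref (u.length + 1)).of_prefix ⟨applyM ψ v, ?_⟩
  show applyM ψ u ++ applyM ψ v = applyM ψ (mpow ψ u.length c)
  rw [← hv, applyM_append]

lemma one_le_of_prefInf_sseq {d : ℕ → ℕ} {x : ℕ → AB} (hx : ∀ k, PrefInf (sseq d (k + 1)) x) :
    1 ≤ d 1 := by
  by_contra h
  have h2 := hx 1
  rw [sseq_two, show d 1 = 0 by omega] at h2
  exact absurd ((PrefInf.head h2).symm.trans (PrefInf.head (hx 0))) (by decide)

/-- The directive sequence `(l₁, …, l_q, t + d₁, d₂, d₃, …)`. -/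
def normalDirective (l : List ℕ) (t : ℕ) (d : ℕ → ℕ) (i : ℕ) : ℕ :=
  if i ≤ l.length then l.getD (i - 1) 0 else if i = l.length + 1 then t + d 1 else d (i - l.length)

lemma normalDirective_length_succ (l : List ℕ) (t : ℕ) (d : ℕ → ℕ) :
    normalDirective l t d (l.length + 1) = t + d 1 := by
  simp [normalDirective]

lemma normalDirective_add_length (l : List ℕ) (t : ℕ) (d : ℕ → ℕ) {i : ℕ} (hi : 2 ≤ i) :
    normalDirective l t d (i + l.length) = d i := by
  simp [normalDirective, show i ≠ 0 by omega, show i + l.length ≠ l.length + 1 by omega]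

lemma one_le_normalDirective {l : List ℕ} {t : ℕ} {d : ℕ → ℕ} (hl : ∀ e ∈ l, 1 ≤ e)
    (hd : ∀ i, 1 ≤ i → 1 ≤ d i) {i : ℕ} (hi : 1 ≤ i) : 1 ≤ normalDirective l t d i := by
  unfold normalDirective
  split_ifs with h1 h2
  · rw [List.getD_eq_getElem _ _ (by omega)]
    exact hl _ (List.getElem_mem _)
  · have := hd 1 le_rfl; omega
  · exact hd _ (by omega)

lemma applyM_normal_sseq_normalDirective (l : List ℕ) (t : ℕ) (d : ℕ → ℕ) (k : ℕ) :
    applyM (compM (muList l) (GM t)) (sseq d (k + 1)) =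
      sseq (normalDirective l t d) (l.length + (k + 1)) :=
  applyM_normal_sseq
    (fun i hi => by simp [normalDirective, show i + 1 ≤ l.length by omega, hi])
    (normalDirective_length_succ l t d) (fun _ hi => normalDirective_add_length l t d hi) k

theorem exists_period_of_generates {ψ : AB → List AB} {c : AB} {d : ℕ → ℕ} {x : ℕ → AB}
    (hψ : IsStandard ψ) (hgen : Generates ψ c x) (hd : ∀ i, 1 ≤ i → 1 ≤ d i)
    (hx : ∀ k, PrefInf (sseq d (k + 1)) x) :
    ∃ n, 2 ≤ n ∧ (∀ i, 2 ≤ i → d (i + (n - 1)) = d i) ∧ d 1 ≤ d n := by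
  obtain rfl : c = AB.a :=
    (PrefInf.head (show PrefInf [c] x from hgen.2 0)).symm.trans (PrefInf.head (hx 0))
  obtain ⟨w, hw, hpr⟩ := hgen.1
  obtain ⟨l, t, hl, hlpos, rfl⟩ := hψ.exists_eq_muList_of_prolongable hw hpr
  have hF : ∀ i, 1 ≤ i → 1 ≤ normalDirective l t d i := fun _ hi =>
    one_le_normalDirective hlpos hd hi
  have hFx : ∀ k, PrefInf (sseq (normalDirective l t d) (k + 1)) x := fun k =>
    (applyM_normal_sseq_normalDirective l t d k ▸
      hgen.prefInf_applyM hψ.isNonErasing (hx k)).of_prefix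
      (sseq_prefix_of_le hF (by omega : k ≤ l.length + k))
  have hdF := eq_of_prefInf_sseq hd hF hx hFx
  refine ⟨l.length + 1, by have := List.length_pos_iff.2 hl; omega, fun i hi => ?_, ?_⟩
  · rw [Nat.add_sub_cancel, hdF _ (by omega), normalDirective_add_length l t d hi]
  · rw [hdF (l.length + 1) (by omega), normalDirective_length_succ]
    omega

theorem generates_of_period {d : ℕ → ℕ} {x : ℕ → AB} {n : ℕ} (hd : ∀ i, 1 ≤ i → 1 ≤ d i)
    (hn : 2 ≤ n) (hper : ∀ i, 2 ≤ i → d (i + (n - 1)) = d i) (hle : d 1 ≤ d n)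
    (hx : ∀ k, PrefInf (sseq d (k + 1)) x) :
    ∃ ψ, IsStandard ψ ∧ Generates ψ AB.a x := by
  obtain ⟨q, rfl⟩ : ∃ q, n = q + 1 := ⟨n - 1, by omega⟩
  set l := (List.range q).map fun i => d (i + 1)
  set ψ := compM (muList l) (GM (d (q + 1) - d 1))
  have hlen : l.length = q := by simp [l]
  have hψ : ∀ k, applyM ψ (sseq d (k + 1)) = sseq d (q + (k + 1)) := by
    intro k
    rw [applyM_normal_sseq (F := d) (by simp [l]) (by rw [hlen]; omega)
      (fun i hi => by rw [hlen]; exact hper i hi), hlen]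
  have hmpow : ∀ m, mpow ψ m AB.a = sseq d (m * q + 1) := by
    intro m
    induction m with
    | zero => simp [mpow, sseq]
    | succ m ih =>
        show applyM ψ (mpow ψ m AB.a) = _
        rw [ih, hψ]
        congr 1
        ring
  refine ⟨ψ, (isStandard_muList l).comp (isStandard_GM _), ⟨?_, fun m => hmpow m ▸ hx _⟩⟩
  have hψa : ψ AB.a = sseq d (q + 1) := by
    simpa [sseq, applyM_singleton] using hψ 0
  obtain ⟨u, hu⟩ := sseq_prefix_of_le hd (show 1 ≤ q by omega)
  obtain ⟨e, he⟩ := Nat.exists_eq_add_of_le' (hd 1 le_rfl)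
  refine ⟨List.replicate e AB.a ++ AB.b :: u, by simp, ?_⟩
  rw [hψa, ← hu, sseq_two, he]
  simp [List.replicate_succ]

lemma cf_digit_eq_floor {x : ℕ → ℝ} {a : ℕ → ℕ} (hx : ∀ i, 0 < x i ∧ x i < 1)
    (hrec : ∀ i, 1 / x i = (a (i + 1) : ℝ) + x (i + 1)) (i : ℕ) :
    a (i + 1) = ⌊1 / x i⌋₊ := by
  rw [hrec, add_comm ((a (i + 1) : ℕ) : ℝ), Nat.floor_add_natCast (hx _).1.le,
    Nat.floor_eq_zero.2 (hx _).2, zero_add]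

lemma HasCF.one_le {γ : ℝ} {a : ℕ → ℕ} (h : HasCF γ a) {i : ℕ} (hi : 1 ≤ i) : 1 ≤ a i := by
  obtain ⟨x, -, hx, hrec⟩ := h
  obtain ⟨j, rfl⟩ := Nat.exists_eq_add_of_le' hi
  rw [cf_digit_eq_floor hx hrec, Nat.one_le_floor_iff]
  exact (one_lt_one_div (hx j).1 (hx j).2).le

lemma HasCF.unique {γ : ℝ} {a b : ℕ → ℕ} (ha : HasCF γ a) (hb : HasCF γ b) {i : ℕ}
    (hi : 1 ≤ i) : a i = b i := by
  obtain ⟨x, hx0, hx, hrecx⟩ := ha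
  obtain ⟨y, hy0, hy, hrecy⟩ := hb
  have hxy : ∀ i, x i = y i := by
    intro i
    induction i with
    | zero => rw [hx0, hy0]
    | succ i ih =>
        have hdig : (a (i + 1) : ℝ) = b (i + 1) := by
          rw [cf_digit_eq_floor hx hrecx, cf_digit_eq_floor hy hrecy, ih]
        have := hrecx i
        rw [ih] at this
        linarith [hrecy i]
  obtain ⟨j, rfl⟩ := Nat.exists_eq_add_of_le' hi
  rw [cf_digit_eq_floor hx hrecx, cf_digit_eq_floor hy hrecy, hxy]

lemma HasCF.lt_half {γ : ℝ} {a : ℕ → ℕ} (h : HasCF γ a) (h2 : 2 ≤ a 1) : γ < 1 / 2 := by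
  obtain ⟨x, rfl, hx, hrec⟩ := h
  have h2' : (2 : ℝ) ≤ a 1 := by exact_mod_cast h2
  have : 2 < 1 / x 0 := by linarith [hrec 0, (hx 1).1]
  exact (lt_one_div two_pos (hx 0).1).1 this

/-- The directive sequence `(a₁ - 1, a₂, a₃, …)` of `c_γ` for `γ = [0; a₁, a₂, …]`. -/
def cfDirective (a : ℕ → ℕ) : ℕ → ℕ := fun i => if i ≤ 1 then a 1 - 1 else a i

lemma cfDirective_one (a : ℕ → ℕ) : cfDirective a 1 = a 1 - 1 := rfl

lemma cfDirective_of_two_le (a : ℕ → ℕ) {i : ℕ} (hi : 2 ≤ i) : cfDirective a i = a i :=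
  if_neg (by omega)

lemma HasCF.one_le_cfDirective {γ : ℝ} {a : ℕ → ℕ} (ha : HasCF γ a) (ha1 : 2 ≤ a 1) {i : ℕ}
    (hi : 1 ≤ i) : 1 ≤ cfDirective a i := by
  rcases hi.eq_or_lt with rfl | hi
  · rw [cfDirective_one]; omega
  · rw [cfDirective_of_two_le a hi]; exact ha.one_le hi.le

lemma HasCF.cfTypeI_iff {γ : ℝ} {a : ℕ → ℕ} (ha : HasCF γ a) (ha1 : 2 ≤ a 1) :
    CFTypeI γ ↔ ∃ n, 2 ≤ n ∧
      (∀ i, 2 ≤ i → cfDirective a (i + (n - 1)) = cfDirective a i) ∧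
      cfDirective a 1 ≤ cfDirective a n := by
  constructor
  · rintro ⟨a', ha', -, n, hn, d, -, had1, had, hper, hle⟩
    have hd : ∀ i, 1 ≤ i → d i = cfDirective a i := by
      intro i hi
      rcases hi.eq_or_lt with rfl | hi
      · have := ha'.unique ha le_rfl
        rw [cfDirective_one]; omega
      · rw [cfDirective_of_two_le a hi, ← had i hi, ha'.unique ha hi.le]
    refine ⟨n, hn, fun i hi => ?_, ?_⟩
    · rw [← hd _ (by omega), ← hd i (by omega), hper i hi]
    · rw [← hd 1 le_rfl, ← hd n (by omega)]; exact hle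
  · rintro ⟨n, hn, hper, hle⟩
    refine ⟨a, ha, ha.lt_half ha1, n, hn, cfDirective a, fun i hi => ha.one_le_cfDirective ha1 hi,
      ?_, fun i hi => (cfDirective_of_two_le a hi).symm, hper, hle⟩
    rw [cfDirective_one]; omega

lemma HasCF.not_cfTypeII {γ : ℝ} {a : ℕ → ℕ} (ha : HasCF γ a) (ha1 : 2 ≤ a 1) :
    ¬ CFTypeII γ := by
  rintro ⟨a', ha', -, -, -, -, -, ha'1, -⟩
  have := ha'.unique ha le_rfl
  omega

/-- For an irrational γ ∈ (0,1) with continued fraction expansion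
[0;a₁,a₂,…] (so that the directive sequence of c_γ is (a₁ − 1, a₂, a₃, …)), the
characteristic Sturmian word c_γ is generated by a standard morphism if and only
if γ is a Sturm number. -/
theorem statement10 (γ : ℝ) (hirr : Irrational γ) (h0 : 0 < γ) (h1 : γ < 1)
    (a : ℕ → ℕ) (ha : HasCF γ a)
    (c : ℕ → AB)
    (hc : ∀ k, PrefInf (sseq (fun i => if i ≤ 1 then a 1 - 1 else a i) (k + 1)) c) :
    (∃ ψ : AB → List AB, ∃ l : AB, IsStandard ψ ∧ Generates ψ l c) ↔
      IsSturmNumber γ := by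
  have ha1 : 2 ≤ a 1 := by
    have := one_le_of_prefInf_sseq hc
    simp only [le_refl, if_true] at this
    omega
  have hd : ∀ i, 1 ≤ i → 1 ≤ cfDirective a i := fun i hi => ha.one_le_cfDirective ha1 hi
  rw [IsSturmNumber, ha.cfTypeI_iff ha1, or_iff_left (ha.not_cfTypeII ha1)]
  simp only [hirr, h0, h1, true_and]
  constructor
  · rintro ⟨ψ, l, hψ, hgen⟩
    exact exists_period_of_generates hψ hgen hd hc
  · rintro ⟨n, hn, hper, hle⟩
    obtain ⟨ψ, hψ, hgen⟩ := generates_of_period hd hn hper hle hc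
    exact ⟨ψ, AB.a, hψ, hgen⟩
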